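/- arXiv:2508.19608 — 7 statements merged into one kernel-verified Lean document; each statement's English description precedes it below -/
import Mathlib

section
/- For every real x ≥ 0, x·(1 - tanh(x)) ≤ 0.2785. -/
/-! The substitution `t = 2x` turns `x (1 - tanh x)` into `t / (eᵗ + 1)`, whose maximum `c ≈ 0.27846`
is attained where `t = 1 + e⁻ᵗ` and satisfies `c eᶜ⁺¹ = 1`. The bound `t ≤ c (eᵗ + 1)` then follows
from the tangent line of `exp` at `1 + c`. -/

open Real

lemma one_sub_tanh_eq (x : ℝ) : 1 - tanh x = 2 / (exp (2 * x) + 1) := by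
  have hexp : exp (2 * x) = exp x * exp x := by rw [← exp_add, two_mul]
  rw [tanh_eq, exp_neg, hexp]
  field_simp
  ring

lemma le_mul_exp_add {c : ℝ} (hc : 1 ≤ c * exp (1 + c)) (t : ℝ) : t ≤ c * exp t + c := by
  have hc₀ : 0 < c := by
    by_contra! h
    nlinarith [exp_pos (1 + c)]
  rcases le_or_gt t c with ht | ht
  · nlinarith [exp_pos t]
  · have tangent : exp (1 + c) * (t - c) ≤ exp t := by
      calc exp (1 + c) * (t - c) ≤ exp (1 + c) * exp (t - (1 + c)) := by
            gcongr
            linarith [add_one_le_exp (t - (1 + c))]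
        _ = exp t := by rw [← exp_add]; ring_nf
    nlinarith

lemma mul_one_sub_tanh_le_of {c : ℝ} (hc : 1 ≤ c * exp (1 + c)) (x : ℝ) :
    x * (1 - tanh x) ≤ c := by
  have hpos : 0 < exp (2 * x) + 1 := by positivity
  rw [one_sub_tanh_eq, mul_div_assoc', div_le_iff₀ hpos]
  linarith [le_mul_exp_add hc (2 * x)]

lemma one_le_mul_exp : (1 : ℝ) ≤ 0.2785 * exp (1 + 0.2785) := by
  have h := sum_le_exp_of_nonneg (x := 1 + 0.2785) (by norm_num) 10
  norm_num [Finset.sum_range_succ, Nat.factorial] at h ⊢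
  linarith

theorem mul_one_sub_tanh_le_general (x : ℝ) :
    x * (1 - Real.tanh x) ≤ 0.2785 :=
  mul_one_sub_tanh_le_of one_le_mul_exp x

theorem mul_one_sub_tanh_le (x : ℝ) (hx : 0 ≤ x) :
    x * (1 - Real.tanh x) ≤ 0.2785 :=
  mul_one_sub_tanh_le_general x
end

section
/- Let α: [0,∞) → [0,∞) be a continuous, strictly increasing, unbounded function with α(0) = 0 (a class-K∞ function), and let c_s be a constant. Suppose s: [0,∞) → ℝ is differentiable and satisfies ṡ(t) ≤ -α(s(t)) + α(c_s) for all t ≥ 0 (with α extended appropriately if s takes negative values, e.g., by odd extension). Then there exists a class-KL function β such that s(t) ≤ β(s(0) - c_s, t) + c_s for all t ≥ 0. -/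
/-!
Sublevel sets `{s ≤ K}` with `K ≥ c_s` are forward invariant, since above `c_s` the right-hand
side is nonpositive; and while `s ≥ c_s + ε` it decreases at rate at least
`α (c_s + ε) - α c_s > 0`, so it reaches that level in finite time and stays below it. Hence
`s - c_s` is bounded above with `limsup ≤ 0`, and therefore lies under a continuous, positive,
decreasing `G` tending to `0` (the running supremum, averaged over windows of length one, plus
`exp (-t)`). With `r₀ = s 0 - c_s > 0` take `β r t = max r 0 * G t / r₀`; when `r₀ ≤ 0`
invariance gives `s ≤ c_s` and `β r t = max r 0 * G t` works.
-/

open Set Filter Topology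

section Comparison

variable {α s s' : ℝ → ℝ} {c : ℝ}

theorem comparison_le_of_le (hmono : Monotone α) (hs : ∀ t, 0 ≤ t → HasDerivAt s (s' t) t)
    (hineq : ∀ t, 0 ≤ t → s' t ≤ -α (s t) + α c) {K a b : ℝ} (hcK : c ≤ K) (ha : 0 ≤ a)
    (hab : a ≤ b) (hsa : s a ≤ K) : s b ≤ K := by
  by_contra! hlt
  set ε := (s b - K) / (b - a + 1)
  have hε : 0 < ε := div_pos (by linarith) (by linarith)
  have hεb : ε * (b - a + 1) = s b - K := div_mul_cancel₀ _ (by linarith)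
  -- Fence `s` by `K + ε (t - a)`: where they touch, `s ≥ c` forces `s' ≤ 0 < ε`.
  have hfence : ∀ ⦃x⦄, x ∈ Icc a b → s x ≤ K + ε * (x - a) := by
    refine image_le_of_deriv_right_lt_deriv_boundary (f' := s') (B' := fun _ => ε)
      (fun x hx => (hs x (ha.trans hx.1)).continuousAt.continuousWithinAt)
      (fun x hx => (hs x (ha.trans hx.1)).hasDerivWithinAt) (by simpa using hsa)
      (fun x => by simpa using ((hasDerivAt_id x).sub_const a).const_mul ε |>.const_add K)
      fun x hx hsx => ?_
    have hKx : K ≤ s x := by rw [hsx]; nlinarith [hx.1]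
    linarith [hineq x (ha.trans hx.1), hmono (hcK.trans hKx)]
  linarith [hfence ⟨hab, le_rfl⟩]

theorem comparison_exists_le (hmono : StrictMono α) (hs : ∀ t, 0 ≤ t → HasDerivAt s (s' t) t)
    (hineq : ∀ t, 0 ≤ t → s' t ≤ -α (s t) + α c) {ε : ℝ} (hε : 0 < ε) :
    ∃ t, 0 ≤ t ∧ s t ≤ c + ε := by
  by_contra! habove
  set δ := α (c + ε) - α c
  have hδ : 0 < δ := sub_pos.2 (hmono (by linarith))
  have hB : ∀ x, HasDerivAt (fun x => s 0 + -δ * x) (-δ) x := fun x => by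
    simpa using ((hasDerivAt_id x).const_mul (-δ)).const_add (s 0)
  have hdecay : ∀ ⦃x⦄, x ∈ Icc 0 ((s 0 - c) / δ) → s x ≤ s 0 + -δ * x := by
    refine image_le_of_deriv_right_le_deriv_boundary (f' := s') (B' := fun _ => -δ)
      (fun x hx => (hs x hx.1).continuousAt.continuousWithinAt)
      (fun x hx => (hs x hx.1).hasDerivWithinAt) (by simp)
      (fun x _ => (hB x).continuousAt.continuousWithinAt) (fun x _ => (hB x).hasDerivWithinAt)
      fun x hx => ?_
    linarith [hineq x hx.1, hmono.monotone (habove x hx.1).le]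
  have hT : 0 ≤ (s 0 - c) / δ := div_nonneg (by linarith [habove 0 le_rfl]) hδ.le
  have := hdecay ⟨hT, le_rfl⟩
  rw [neg_mul, mul_div_cancel₀ _ hδ.ne'] at this
  linarith [habove _ hT]

theorem comparison_eventually_le (hmono : StrictMono α) (hs : ∀ t, 0 ≤ t → HasDerivAt s (s' t) t)
    (hineq : ∀ t, 0 ≤ t → s' t ≤ -α (s t) + α c) {ε : ℝ} (hε : 0 < ε) :
    ∀ᶠ t in atTop, s t ≤ c + ε := by
  obtain ⟨t₀, ht₀, hst₀⟩ := comparison_exists_le hmono hs hineq hε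
  exact eventually_atTop.2 ⟨t₀, fun t ht =>
    comparison_le_of_le hmono.monotone hs hineq (by linarith) ht₀ ht hst₀⟩

end Comparison

theorem exists_antitone_majorant_tendsto_zero {f : ℝ → ℝ} (hbdd : BddAbove (range f))
    (hf : ∀ ε > 0, ∀ᶠ t in atTop, f t ≤ ε) :
    ∃ d : ℝ → ℝ, Antitone d ∧ Tendsto d atTop (𝓝 0) ∧ ∀ t, f t ≤ d t := by
  have hbdd' : ∀ t, BddAbove (f '' Ici t) := fun t => hbdd.mono (image_subset_range _ _)
  refine ⟨fun t => max (sSup (f '' Ici t)) 0, fun t₁ t₂ h => ?_, ?_, fun t => ?_⟩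
  · exact max_le_max (csSup_le_csSup (hbdd' t₁) (nonempty_Ici.image f)
      (image_mono (Ici_subset_Ici.2 h))) le_rfl
  · refine tendsto_order.2
      ⟨fun a ha => Eventually.of_forall fun t => ha.trans_le (le_max_right _ _), fun a ha => ?_⟩
    obtain ⟨T, hT⟩ := eventually_atTop.1 (hf (a / 2) (half_pos ha))
    filter_upwards [eventually_ge_atTop T] with t ht
    refine max_lt ((csSup_le (nonempty_Ici.image f) ?_).trans_lt (half_lt_self ha)) ha
    rintro _ ⟨τ, hτ, rfl⟩
    exact hT τ (ht.trans hτ)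
  · exact (le_csSup (hbdd' t) (mem_image_of_mem f self_mem_Ici)).trans (le_max_left _ _)

theorem Antitone.exists_continuous_majorant {d : ℝ → ℝ} (hd : Antitone d)
    (hlim : Tendsto d atTop (𝓝 0)) :
    ∃ g : ℝ → ℝ, Continuous g ∧ Antitone g ∧ Tendsto g atTop (𝓝 0) ∧ ∀ t, d t ≤ g t := by
  have hint : ∀ a b : ℝ, IntervalIntegrable d MeasureTheory.volume a b :=
    fun _ _ => hd.intervalIntegrable
  have hlower : ∀ t, d t ≤ ∫ x in (t - 1)..t, d x := fun t => by
    simpa using intervalIntegral.integral_mono_on (sub_le_self t zero_le_one)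
      intervalIntegrable_const (hint _ _) fun x hx => hd hx.2
  have hupper : ∀ t, ∫ x in (t - 1)..t, d x ≤ d (t - 1) := fun t => by
    simpa using intervalIntegral.integral_mono_on (sub_le_self t zero_le_one) (hint _ _)
      intervalIntegrable_const fun x hx => hd hx.1
  refine ⟨fun t => ∫ x in (t - 1)..t, d x, ?_, fun t₁ t₂ h => ?_, ?_, hlower⟩
  · have hF := intervalIntegral.continuous_primitive hint 0
    simp_rw [← fun t => intervalIntegral.integral_interval_sub_left (hint 0 t) (hint 0 (t - 1))]
    exact hF.sub (hF.comp (continuous_id.sub continuous_const))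
  · have hshift : ∫ x in (t₂ - 1)..t₂, d x = ∫ x in (t₁ - 1)..t₁, d (x + (t₂ - t₁)) := by
      rw [intervalIntegral.integral_comp_add_right]; ring_nf
    dsimp only
    rw [hshift]
    exact intervalIntegral.integral_mono_on (by linarith)
      (hd.comp_monotone (monotone_id.add_const _)).intervalIntegrable (hint _ _)
      fun x _ => hd (by linarith)
  · exact tendsto_of_tendsto_of_tendsto_of_le_of_le hlim
      (hlim.comp (tendsto_atTop_add_const_right atTop (-1) tendsto_id)) hlower hupper

theorem exists_continuous_antitone_pos_majorant {f : ℝ → ℝ} (hbdd : BddAbove (range f))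
    (hf : ∀ ε > 0, ∀ᶠ t in atTop, f t ≤ ε) :
    ∃ G : ℝ → ℝ, Continuous G ∧ Antitone G ∧ (∀ t, 0 < G t) ∧ Tendsto G atTop (𝓝 0) ∧
      ∀ t, f t ≤ G t := by
  obtain ⟨d, hd, hdlim, hfd⟩ := exists_antitone_majorant_tendsto_zero hbdd hf
  obtain ⟨g, hgc, hga, hglim, hdg⟩ := hd.exists_continuous_majorant hdlim
  have hexp : Antitone fun t => Real.exp (-t) := fun _ _ h => Real.exp_le_exp.2 (neg_le_neg h)
  refine ⟨fun t => g t + Real.exp (-t), hgc.add (Real.continuous_exp.comp continuous_neg),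
    hga.add hexp, fun t => add_pos_of_nonneg_of_pos (hga.le_of_tendsto hglim t) (Real.exp_pos _),
    by simpa using hglim.add (Real.tendsto_exp_atBot.comp tendsto_neg_atTop_atBot),
    fun t => (hfd t).trans ((hdg t).trans (le_add_of_nonneg_right (Real.exp_pos _).le))⟩

def IsClassKL (β : ℝ → ℝ → ℝ) : Prop :=
  Continuous (Function.uncurry β) ∧
    (∀ t, 0 ≤ t → StrictMonoOn (fun r => β r t) (Ici 0) ∧ β 0 t = 0) ∧
    ∀ r, 0 ≤ r → AntitoneOn (fun t => β r t) (Ici 0) ∧ Tendsto (fun t => β r t) atTop (𝓝 0)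

theorem isClassKL_max_mul {H : ℝ → ℝ} (hcont : Continuous H) (hanti : Antitone H)
    (hpos : ∀ t, 0 < H t) (hlim : Tendsto H atTop (𝓝 0)) :
    IsClassKL fun r t => max r 0 * H t := by
  refine ⟨(continuous_fst.max continuous_const).mul (hcont.comp continuous_snd),
    fun t _ => ⟨fun a ha b hb hab => ?_, by simp⟩,
    fun r _ => ⟨fun t₁ _ t₂ _ h => mul_le_mul_of_nonneg_left (hanti h) (le_max_right _ _),
      by simpa using hlim.const_mul (max r 0)⟩⟩
  simp only [max_eq_left (mem_Ici.1 ha), max_eq_left (mem_Ici.1 hb)]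
  exact mul_lt_mul_of_pos_right hab (hpos t)

theorem comparison_KL_general
    (α : ℝ → ℝ) (hmono : StrictMono α)
    (c_s : ℝ) (s s' : ℝ → ℝ)
    (hs : ∀ t, 0 ≤ t → HasDerivAt s (s' t) t)
    (hineq : ∀ t, 0 ≤ t → s' t ≤ -α (s t) + α c_s) :
    ∃ β : ℝ → ℝ → ℝ,
      Continuous (Function.uncurry β) ∧
      (∀ t, 0 ≤ t → StrictMonoOn (fun r => β r t) (Set.Ici 0) ∧ β 0 t = 0) ∧
      (∀ r, 0 ≤ r → (AntitoneOn (fun t => β r t) (Set.Ici 0) ∧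
        Filter.Tendsto (fun t => β r t) Filter.atTop (nhds 0))) ∧
      ∀ t, 0 ≤ t → s t ≤ β (s 0 - c_s) t + c_s := by
  have hbdd : BddAbove (range fun t => s (max t 0) - c_s) := ⟨max (s 0) c_s - c_s, by
    rintro _ ⟨t, rfl⟩
    exact sub_le_sub_right (comparison_le_of_le hmono.monotone hs hineq (le_max_right _ _)
      le_rfl (le_max_right _ _) (le_max_left _ _)) _⟩
  have hlimsup : ∀ ε > 0, ∀ᶠ t in atTop, s (max t 0) - c_s ≤ ε := fun ε hε => by
    filter_upwards [comparison_eventually_le hmono hs hineq hε, eventually_ge_atTop 0]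
      with t hst ht
    rw [max_eq_left ht]
    linarith
  obtain ⟨G, hGc, hGa, hGpos, hGlim, hsG⟩ := exists_continuous_antitone_pos_majorant hbdd hlimsup
  by_cases hr : 0 < s 0 - c_s
  · obtain ⟨hc, hK, hL⟩ := isClassKL_max_mul (hGc.div_const _)
      (fun _ _ h => div_le_div_of_nonneg_right (hGa h) hr.le) (fun t => div_pos (hGpos t) hr)
      (by simpa using hGlim.div_const (s 0 - c_s))
    refine ⟨_, hc, hK, hL, fun t ht => ?_⟩
    have hst := hsG t
    simp only [max_eq_left ht, max_eq_left hr.le, mul_div_cancel₀ _ hr.ne'] at hst ⊢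
    linarith
  · obtain ⟨hc, hK, hL⟩ := isClassKL_max_mul hGc hGa hGpos hGlim
    refine ⟨_, hc, hK, hL, fun t ht => ?_⟩
    simpa [max_eq_right (not_lt.1 hr)] using
      comparison_le_of_le hmono.monotone hs hineq le_rfl le_rfl ht (by linarith)

theorem comparison_KL
    (α : ℝ → ℝ) (hcont : Continuous α) (hmono : StrictMono α)
    (h0 : α 0 = 0) (hodd : ∀ x, α (-x) = -α x)
    (hunb : Filter.Tendsto α Filter.atTop Filter.atTop)
    (c_s : ℝ) (s s' : ℝ → ℝ)
    (hs : ∀ t, 0 ≤ t → HasDerivAt s (s' t) t)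
    (hineq : ∀ t, 0 ≤ t → s' t ≤ -α (s t) + α c_s) :
    ∃ β : ℝ → ℝ → ℝ,
      Continuous (Function.uncurry β) ∧
      (∀ t, 0 ≤ t → StrictMonoOn (fun r => β r t) (Set.Ici 0) ∧ β 0 t = 0) ∧
      (∀ r, 0 ≤ r → (AntitoneOn (fun t => β r t) (Set.Ici 0) ∧
        Filter.Tendsto (fun t => β r t) Filter.atTop (nhds 0))) ∧
      ∀ t, 0 ≤ t → s t ≤ β (s 0 - c_s) t + c_s :=
  comparison_KL_general α hmono c_s s s' hs hineq
end

section
/- Let V, η, σ ≥ 0 with η > 0, and let η̄ ∈ K∞ with inverse η̄⁻¹ ∈ K∞. If η‖e‖² ≤ V ≤ η̄(‖e‖) + σ, then ‖e‖² ≥ (η̄⁻¹(V/2))² - (η̄⁻¹(σ))² whenever V ≥ σ, and in all cases ‖e‖² ≥ max(0, (η̄⁻¹(V/2))² - (η̄⁻¹(σ))²). -/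
/-! Since `V - σ ≤ η̄(‖e‖)`, applying `η̄⁻¹` gives `η̄⁻¹(V - σ) ≤ ‖e‖`. The midpoint `V / 2` of
`V - σ` and `σ` lies below the larger of the two, so by monotonicity
`η̄⁻¹(V/2)² ≤ η̄⁻¹(V - σ)² + η̄⁻¹(σ)² ≤ ‖e‖² + η̄⁻¹(σ)²`. When `V < σ` the right-hand side of the
bound is already nonpositive, since then `V / 2 ≤ σ`. -/

open Set

namespace MonotoneOn

variable {α : ℝ → ℝ} (hα : MonotoneOn α (Ici 0)) (hα0 : ∀ x, 0 ≤ x → 0 ≤ α x)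
include hα hα0

theorem sq_map_add_div_two_le {a b : ℝ} (ha : 0 ≤ a) (hb : 0 ≤ b) :
    α ((a + b) / 2) ^ 2 ≤ α a ^ 2 + α b ^ 2 := by
  have hmid : α ((a + b) / 2) ≤ max (α a) (α b) := by
    rw [← hα.map_max ha hb]
    exact hα (by simp only [mem_Ici]; linarith) (le_max_of_le_left ha)
      (by linarith [le_max_left a b, le_max_right a b])
  have hmid0 : 0 ≤ α ((a + b) / 2) := hα0 _ (by linarith)
  rcases le_total (α a) (α b) with h | h
  · rw [max_eq_right h] at hmid
    nlinarith [sq_nonneg (α a)]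
  · rw [max_eq_left h] at hmid
    nlinarith [sq_nonneg (α b)]

theorem sq_map_half_sub_sq_le_of_map_sub_le {V σ r : ℝ} (hσ : 0 ≤ σ) (hσV : σ ≤ V)
    (hr : α (V - σ) ≤ r) : α (V / 2) ^ 2 - α σ ^ 2 ≤ r ^ 2 := by
  have hsplit := hα.sq_map_add_div_two_le hα0 (sub_nonneg.mpr hσV) hσ
  rw [sub_add_cancel] at hsplit
  have := pow_le_pow_left₀ (hα0 _ (sub_nonneg.mpr hσV)) hr 2
  linarith

theorem sq_map_half_sub_sq_nonpos {V σ : ℝ} (hV : 0 ≤ V) (hVσ : V ≤ σ) :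
    α (V / 2) ^ 2 - α σ ^ 2 ≤ 0 := by
  have hle : α (V / 2) ≤ α σ := hα (by simp only [mem_Ici]; linarith) (hV.trans hVσ) (by linarith)
  nlinarith [hα0 (V / 2) (by linarith)]

end MonotoneOn

theorem lyapunov_lower_bound_general {n : ℕ}
    (ηb ηbinv : ℝ → ℝ)
    (hnonneg : ∀ x, 0 ≤ x → 0 ≤ ηb x)
    (hmono' : StrictMonoOn ηbinv (Set.Ici 0))
    (hnonneg' : ∀ x, 0 ≤ x → 0 ≤ ηbinv x)
    (hlinv : ∀ x, 0 ≤ x → ηbinv (ηb x) = x)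
    (V σ : ℝ) (hV : 0 ≤ V) (hσ : 0 ≤ σ)
    (e : EuclideanSpace ℝ (Fin n))
    (hup : V ≤ ηb ‖e‖ + σ) :
    (σ ≤ V → ‖e‖ ^ 2 ≥ (ηbinv (V / 2)) ^ 2 - (ηbinv σ) ^ 2) ∧
    ‖e‖ ^ 2 ≥ max 0 ((ηbinv (V / 2)) ^ 2 - (ηbinv σ) ^ 2) := by
  have hmono := hmono'.monotoneOn
  have hcase : σ ≤ V → ‖e‖ ^ 2 ≥ (ηbinv (V / 2)) ^ 2 - (ηbinv σ) ^ 2 := by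
    intro hσV
    have hinv : ηbinv (V - σ) ≤ ‖e‖ := by
      have := hmono (sub_nonneg.mpr hσV) (hnonneg _ (norm_nonneg e)) (by linarith)
      rwa [hlinv _ (norm_nonneg e)] at this
    exact hmono.sq_map_half_sub_sq_le_of_map_sub_le hnonneg' hσ hσV hinv
  refine ⟨hcase, max_le (sq_nonneg _) ?_⟩
  rcases le_total σ V with hσV | hVσ
  · exact hcase hσV
  · linarith [hmono.sq_map_half_sub_sq_nonpos hnonneg' hV hVσ, sq_nonneg ‖e‖]

theorem lyapunov_lower_bound {n : ℕ}
    (ηb ηbinv : ℝ → ℝ)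
    (hcont : Continuous ηb) (hmono : StrictMonoOn ηb (Set.Ici 0))
    (h0 : ηb 0 = 0) (hnonneg : ∀ x, 0 ≤ x → 0 ≤ ηb x)
    (hunb : Filter.Tendsto ηb Filter.atTop Filter.atTop)
    (hcont' : Continuous ηbinv) (hmono' : StrictMonoOn ηbinv (Set.Ici 0))
    (h0' : ηbinv 0 = 0) (hnonneg' : ∀ x, 0 ≤ x → 0 ≤ ηbinv x)
    (hunb' : Filter.Tendsto ηbinv Filter.atTop Filter.atTop)
    (hlinv : ∀ x, 0 ≤ x → ηbinv (ηb x) = x)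
    (hrinv : ∀ x, 0 ≤ x → ηb (ηbinv x) = x)
    (V η σ : ℝ) (hV : 0 ≤ V) (hη : 0 < η) (hσ : 0 ≤ σ)
    (e : EuclideanSpace ℝ (Fin n))
    (hlow : η * ‖e‖ ^ 2 ≤ V) (hup : V ≤ ηb ‖e‖ + σ) :
    (σ ≤ V → ‖e‖ ^ 2 ≥ (ηbinv (V / 2)) ^ 2 - (ηbinv σ) ^ 2) ∧
    ‖e‖ ^ 2 ≥ max 0 ((ηbinv (V / 2)) ^ 2 - (ηbinv σ) ^ 2) :=
  lyapunov_lower_bound_general ηb ηbinv hnonneg hmono' hnonneg' hlinv V σ hV hσ e hup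
end

section
/- Let R, R_d ∈ SO(3), e_R = ½(Rᵀ R_d - R_dᵀ R)^∨, and Ψ = ½tr(I₃ - Rᵀ R_d). Suppose R_d is constant and R evolves by Ṙ = R ω^∧ for angular velocity ω ∈ ℝ³, and define e_ω = Rᵀ R_d ω_d - ω with ω_d = 0. Then Ψ̇ = e_ωᵀ e_R, i.e., d/dt [½tr(I₃ - Rᵀ R_d)] = -ωᵀ e_R = e_ωᵀ e_R. -/
/-!
With `A = Rᵀ R_d`, the kinematics give `Ψ̇ = -½ tr((R ω^∧)ᵀ R_d) = ½ tr(ω^∧ A)` because `ω^∧` is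
skew, and for every `3 × 3` matrix `tr(w^∧ A) = -w · (A - Aᵀ)^∨`. Since `Aᵀ = R_dᵀ R`, this is
`-ω · e_R`.
-/

open Matrix

/-- The hat map sending a vector in ℝ³ to the corresponding skew-symmetric matrix. -/
def hat (v : Fin 3 → ℝ) : Matrix (Fin 3) (Fin 3) ℝ :=
  !![0, -v 2, v 1; v 2, 0, -v 0; -v 1, v 0, 0]

/-- Inverse of the hat map. -/
def vee (A : Matrix (Fin 3) (Fin 3) ℝ) : Fin 3 → ℝ :=
  ![A 2 1, A 0 2, A 1 0]

theorem hat_transpose (w : Fin 3 → ℝ) : (hat w)ᵀ = -hat w := by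
  ext i j
  fin_cases i <;> fin_cases j <;> simp [hat]

theorem vee_smul (c : ℝ) (A : Matrix (Fin 3) (Fin 3) ℝ) : vee (c • A) = c • vee A := by
  ext i
  fin_cases i <;> rfl

theorem trace_hat_mul (w : Fin 3 → ℝ) (A : Matrix (Fin 3) (Fin 3) ℝ) :
    trace (hat w * A) = -(w ⬝ᵥ vee (A - Aᵀ)) := by
  simp only [trace, diag, mul_apply, Fin.sum_univ_succ, Fin.sum_univ_zero]
  simp [hat, vee, dotProduct, Fin.sum_univ_succ]
  ring

theorem trace_transpose_mul_hat_mul (R B : Matrix (Fin 3) (Fin 3) ℝ) (w : Fin 3 → ℝ) :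
    trace ((R * hat w)ᵀ * B) = w ⬝ᵥ vee (Rᵀ * B - Bᵀ * R) := by
  rw [transpose_mul, hat_transpose, Matrix.neg_mul, Matrix.neg_mul, Matrix.mul_assoc, trace_neg,
    trace_hat_mul, neg_neg, transpose_mul, transpose_transpose]

theorem hasDerivAt_trace_transpose_mul {𝕜 n : Type*} [NontriviallyNormedField 𝕜] [Fintype n]
    {M : 𝕜 → Matrix n n 𝕜} {M' : Matrix n n 𝕜} {t : 𝕜}
    (hM : ∀ i j, HasDerivAt (fun τ => M τ i j) (M' i j) t) (B : Matrix n n 𝕜) :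
    HasDerivAt (fun τ => trace ((M τ)ᵀ * B)) (trace (M'ᵀ * B)) t := by
  simp only [trace, diag, mul_apply, transpose_apply]
  exact HasDerivAt.fun_sum fun i _ => HasDerivAt.fun_sum fun j _ => (hM j i).mul_const _

theorem attitude_error_derivative_regulation_general
    (R : ℝ → Matrix (Fin 3) (Fin 3) ℝ) (ω : ℝ → Fin 3 → ℝ)
    (Rd : Matrix (Fin 3) (Fin 3) ℝ)
    (hkin : ∀ t, ∀ i j, HasDerivAt (fun τ => R τ i j) ((R t * hat (ω t)) i j) t)
    (eR : ℝ → Fin 3 → ℝ)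
    (heR : ∀ t, eR t = vee ((1 / 2 : ℝ) • ((R t).transpose * Rd - Rd.transpose * R t)))
    (eω : ℝ → Fin 3 → ℝ) (heω : ∀ t, eω t = -ω t) (t : ℝ) :
    HasDerivAt (fun τ => (1 / 2) * Matrix.trace (1 - (R τ).transpose * Rd))
      (dotProduct (eω t) (eR t)) t := by
  have hΨ := ((hasDerivAt_trace_transpose_mul (hkin t) Rd).const_sub
    (trace (1 : Matrix (Fin 3) (Fin 3) ℝ))).const_mul (1 / 2 : ℝ)
  simp only [← trace_sub, trace_transpose_mul_hat_mul] at hΨ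
  refine hΨ.congr_deriv ?_
  rw [heR, heω, vee_smul, dotProduct_smul, neg_dotProduct, smul_eq_mul]

theorem attitude_error_derivative_regulation
    (R : ℝ → Matrix (Fin 3) (Fin 3) ℝ) (ω : ℝ → Fin 3 → ℝ)
    (Rd : Matrix (Fin 3) (Fin 3) ℝ)
    (hRSO : ∀ t, (R t).transpose * R t = 1 ∧ (R t).det = 1)
    (hRdSO : Rd.transpose * Rd = 1 ∧ Rd.det = 1)
    (hkin : ∀ t, ∀ i j, HasDerivAt (fun τ => R τ i j) ((R t * hat (ω t)) i j) t)
    (eR : ℝ → Fin 3 → ℝ)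
    (heR : ∀ t, eR t = vee ((1 / 2 : ℝ) • ((R t).transpose * Rd - Rd.transpose * R t)))
    (eω : ℝ → Fin 3 → ℝ) (heω : ∀ t, eω t = -ω t) (t : ℝ) :
    HasDerivAt (fun τ => (1 / 2) * Matrix.trace (1 - (R τ).transpose * Rd))
      (dotProduct (eω t) (eR t)) t :=
  attitude_error_derivative_regulation_general R ω Rd hkin eR heR eω heω t
end

section
/- Let E₁ = {p : (p - p̄₁)ᵀ Q₁⁻¹ (p - p̄₁) ≤ 1} and E₂ = {p : (p - p̄₂)ᵀ Q₂⁻¹ (p - p̄₂) ≤ 1} be two ellipsoids in ℝ³ with positive definite shape matrices Q₁, Q₂. Define Q̄ = Σ_{i,j} (Q_i/√(tr Q_i))·√(tr Q_j) = (√(tr Q₁) + √(tr Q₂))·(Q₁/√(tr Q₁) + Q₂/√(tr Q₂)). If (p̄₁ - p̄₂)ᵀ Q̄⁻¹ (p̄₁ - p̄₂) > 1, then E₁ ∩ E₂ = ∅. -/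
open Matrix
open scoped Pointwise

/-!
Fix weights `a, b > 0` (the theorem takes `a = √(tr Q₁)`, `b = √(tr Q₂)`) and let
`Q̄ = (a + b) (Q₁ / a + Q₂ / b)`. By Cauchy–Schwarz for the form `Q⁻¹`, the support function of
`E(0, Q)` is `w ↦ √(wᵀ Q w)`. For `u₁ ∈ E(0, Q₁)`, `u₂ ∈ E(0, Q₂)` and `w = Q̄⁻¹ (u₁ + u₂)`
this bounds `s = (u₁ + u₂)ᵀ Q̄⁻¹ (u₁ + u₂) = (u₁ + u₂)ᵀ w` by `√α + √β`, where `α = wᵀ Q₁ w` and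
`β = wᵀ Q₂ w`; on the other hand `s = wᵀ Q̄ w = (a + b) (α / a + β / b) ≥ (√α + √β)²` by
Sedrakyan's inequality. So `s² ≤ s`, i.e. `s ≤ 1`, and `E(c₁, Q₁) + E(c₂, Q₂) ⊆ E(c₁ + c₂, Q̄)`.
A common point `p` of the two ellipsoids would put `0 = p - p` in
`E(p̄₁, Q₁) + (-E(p̄₂, Q₂)) ⊆ E(p̄₁ - p̄₂, Q̄)`, contradicting the hypothesis.
-/

variable {n : Type*} [Fintype n]

theorem add_sq_le_mul_add_div {a b : ℝ} (ha : 0 < a) (hb : 0 < b) (x y : ℝ) :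
    (x + y) ^ 2 ≤ (a + b) * (x ^ 2 / a + y ^ 2 / b) := by
  have h := Finset.sq_sum_div_le_sum_sq_div Finset.univ ![x, y] (g := ![a, b])
    (by simp [Fin.forall_fin_two, ha, hb])
  simp only [Fin.sum_univ_two, Matrix.cons_val_zero, Matrix.cons_val_one] at h
  rwa [div_le_iff₀ (add_pos ha hb), mul_comm] at h

variable [DecidableEq n]

theorem Matrix.PosSemidef.sq_dotProduct_mulVec_le {A : Matrix n n ℝ} (hA : A.PosSemidef)
    (x y : n → ℝ) : (x ⬝ᵥ A *ᵥ y) ^ 2 ≤ (x ⬝ᵥ A *ᵥ x) * (y ⬝ᵥ A *ᵥ y) := by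
  obtain ⟨B, rfl⟩ : ∃ B : Matrix n n ℝ, A = Bᴴ * B := by
    open scoped MatrixOrder in exact CStarAlgebra.nonneg_iff_eq_star_mul_self.mp hA.nonneg
  have hB : ∀ u v : n → ℝ, u ⬝ᵥ (Bᴴ * B) *ᵥ v = (B *ᵥ u) ⬝ᵥ (B *ᵥ v) := fun u v => by
    rw [conjTranspose_eq_transpose_of_trivial, ← mulVec_mulVec, dotProduct_mulVec,
      vecMul_transpose]
  rw [hB, hB, hB]
  simpa only [dotProduct, sq] using
    Finset.sum_mul_sq_le_sq_mul_sq Finset.univ (B *ᵥ x) (B *ᵥ y)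

def ellipsoid (c : n → ℝ) (Q : Matrix n n ℝ) : Set (n → ℝ) :=
  {p | (p - c) ⬝ᵥ Q⁻¹ *ᵥ (p - c) ≤ 1}

theorem sub_mem_ellipsoid_zero_iff {c p : n → ℝ} {Q : Matrix n n ℝ} :
    p - c ∈ ellipsoid 0 Q ↔ p ∈ ellipsoid c Q := by
  rw [ellipsoid, Set.mem_ofPred_eq, sub_zero]; rfl

theorem neg_ellipsoid (c : n → ℝ) (Q : Matrix n n ℝ) : -ellipsoid c Q = ellipsoid (-c) Q := by
  ext p
  simp only [ellipsoid, Set.mem_neg, Set.mem_ofPred_eq, sub_neg_eq_add, ← neg_add', mulVec_neg,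
    dotProduct_neg, neg_dotProduct, neg_neg]

theorem Matrix.PosDef.dotProduct_le_sqrt_of_mem_ellipsoid {Q : Matrix n n ℝ} (hQ : Q.PosDef)
    {u : n → ℝ} (hu : u ∈ ellipsoid 0 Q) (w : n → ℝ) : u ⬝ᵥ w ≤ √(w ⬝ᵥ Q *ᵥ w) := by
  rw [ellipsoid, Set.mem_ofPred_eq, sub_zero] at hu
  have hCS := hQ.inv.posSemidef.sq_dotProduct_mulVec_le u (Q *ᵥ w)
  rw [mulVec_mulVec, nonsing_inv_mul _ ((isUnit_iff_isUnit_det Q).mp hQ.isUnit), one_mulVec,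
    dotProduct_comm (Q *ᵥ w)] at hCS
  refine Real.le_sqrt_of_sq_le (hCS.trans (mul_le_of_le_one_left ?_ hu))
  exact hQ.posSemidef.dotProduct_mulVec_nonneg w

theorem add_mem_ellipsoid_zero {Q₁ Q₂ : Matrix n n ℝ} (hQ₁ : Q₁.PosDef) (hQ₂ : Q₂.PosDef)
    {a b : ℝ} (ha : 0 < a) (hb : 0 < b) {u₁ u₂ : n → ℝ} (hu₁ : u₁ ∈ ellipsoid 0 Q₁)
    (hu₂ : u₂ ∈ ellipsoid 0 Q₂) :
    u₁ + u₂ ∈ ellipsoid 0 ((a + b) • (a⁻¹ • Q₁ + b⁻¹ • Q₂)) := by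
  set Q := (a + b) • (a⁻¹ • Q₁ + b⁻¹ • Q₂) with hQ_def
  have hQ : Q.PosDef :=
    ((hQ₁.smul (inv_pos.2 ha)).add (hQ₂.smul (inv_pos.2 hb))).smul (add_pos ha hb)
  set w := Q⁻¹ *ᵥ (u₁ + u₂)
  set α := w ⬝ᵥ Q₁ *ᵥ w
  set β := w ⬝ᵥ Q₂ *ᵥ w
  have h_support : (u₁ + u₂) ⬝ᵥ w ≤ √α + √β := by
    rw [add_dotProduct]
    exact add_le_add (hQ₁.dotProduct_le_sqrt_of_mem_ellipsoid hu₁ w)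
      (hQ₂.dotProduct_le_sqrt_of_mem_ellipsoid hu₂ w)
  have h_expand : (u₁ + u₂) ⬝ᵥ w = (a + b) * (α / a + β / b) := by
    have hQw : Q *ᵥ w = u₁ + u₂ := by
      rw [mulVec_mulVec, mul_nonsing_inv _ ((isUnit_iff_isUnit_det Q).mp hQ.isUnit), one_mulVec]
    rw [← hQw, dotProduct_comm, hQ_def]
    simp only [smul_mulVec, add_mulVec, dotProduct_smul, dotProduct_add, smul_eq_mul]
    ring
  have hα : 0 ≤ α := hQ₁.posSemidef.dotProduct_mulVec_nonneg w
  have hβ : 0 ≤ β := hQ₂.posSemidef.dotProduct_mulVec_nonneg w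
  have h_sedrakyan : (√α + √β) ^ 2 ≤ (u₁ + u₂) ⬝ᵥ w := by
    simpa only [h_expand, Real.sq_sqrt hα, Real.sq_sqrt hβ] using add_sq_le_mul_add_div ha hb √α √β
  rw [ellipsoid, Set.mem_ofPred_eq, sub_zero]
  nlinarith [Real.sqrt_nonneg α, Real.sqrt_nonneg β]

theorem ellipsoid_add_subset {Q₁ Q₂ : Matrix n n ℝ} (hQ₁ : Q₁.PosDef) (hQ₂ : Q₂.PosDef)
    {a b : ℝ} (ha : 0 < a) (hb : 0 < b) (c₁ c₂ : n → ℝ) :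
    ellipsoid c₁ Q₁ + ellipsoid c₂ Q₂ ⊆ ellipsoid (c₁ + c₂) ((a + b) • (a⁻¹ • Q₁ + b⁻¹ • Q₂)) := by
  rintro _ ⟨p₁, hp₁, p₂, hp₂, rfl⟩
  rw [← sub_mem_ellipsoid_zero_iff, add_sub_add_comm]
  exact add_mem_ellipsoid_zero hQ₁ hQ₂ ha hb (sub_mem_ellipsoid_zero_iff.2 hp₁)
    (sub_mem_ellipsoid_zero_iff.2 hp₂)

theorem ellipsoid_separation
    (p1 p2 : Fin 3 → ℝ) (Q1 Q2 : Matrix (Fin 3) (Fin 3) ℝ)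
    (hQ1 : Q1.PosDef) (hQ2 : Q2.PosDef)
    (Qbar : Matrix (Fin 3) (Fin 3) ℝ)
    (hQbar : Qbar = (Real.sqrt (Matrix.trace Q1) + Real.sqrt (Matrix.trace Q2)) •
      ((Real.sqrt (Matrix.trace Q1))⁻¹ • Q1 + (Real.sqrt (Matrix.trace Q2))⁻¹ • Q2))
    (hsep : dotProduct (p1 - p2) (Qbar⁻¹.mulVec (p1 - p2)) > 1) :
    {p : Fin 3 → ℝ | dotProduct (p - p1) (Q1⁻¹.mulVec (p - p1)) ≤ 1} ∩
      {p : Fin 3 → ℝ | dotProduct (p - p2) (Q2⁻¹.mulVec (p - p2)) ≤ 1} = ∅ := by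
  refine Set.eq_empty_of_forall_notMem
    fun p ⟨(hp1 : p ∈ ellipsoid p1 Q1), (hp2 : p ∈ ellipsoid p2 Q2)⟩ => hsep.not_ge ?_
  have h_zero_mem_sum : (0 : Fin 3 → ℝ) ∈ ellipsoid p1 Q1 + ellipsoid (-p2) Q2 := by
    rw [← neg_ellipsoid]
    simpa only [add_neg_cancel] using Set.add_mem_add hp1 (Set.neg_mem_neg.2 hp2)
  have h_zero_mem : (0 : Fin 3 → ℝ) ∈ ellipsoid (p1 - p2) Qbar := by
    rw [hQbar, sub_eq_add_neg]
    exact ellipsoid_add_subset hQ1 hQ2 (Real.sqrt_pos.2 hQ1.trace_pos)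
      (Real.sqrt_pos.2 hQ2.trace_pos) p1 (-p2) h_zero_mem_sum
  simpa only [ellipsoid, Set.mem_ofPred_eq, zero_sub, mulVec_neg, dotProduct_neg, neg_dotProduct,
    neg_neg] using h_zero_mem
end

section
/- For positive definite matrices Q₁, Q₂ and any unit vector u, √(uᵀ Q₁ u) + √(uᵀ Q₂ u) ≤ √(uᵀ Q̄ u), where Q̄ = (√(tr Q₁) + √(tr Q₂))·(Q₁/√(tr Q₁) + Q₂/√(tr Q₂)). -/
/-!
With `sᵢ = √(tr Qᵢ)`, the two-term Cauchy–Schwarz (Titu) inequality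
`(x + y)² ≤ (s₁ + s₂)(x²/s₁ + y²/s₂)` applied to `x = √(uᵀ Q₁ u)`, `y = √(uᵀ Q₂ u)` is exactly
`(x + y)² ≤ uᵀ Q̄ u`.
-/

open Matrix

lemma add_sq_le_mul_add_sq_div {x y s t : ℝ} (hs : 0 < s) (ht : 0 < t) :
    (x + y) ^ 2 ≤ (s + t) * (x ^ 2 / s + y ^ 2 / t) := by
  rw [div_add_div _ _ hs.ne' ht.ne', mul_div_assoc', le_div_iff₀ (mul_pos hs ht)]
  -- the difference of the two sides is `(t x - s y)²`
  nlinarith [sq_nonneg (t * x - s * y)]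

lemma sqrt_add_sqrt_le_sqrt_mul_inv_mul_add {a b s t : ℝ} (ha : 0 ≤ a) (hb : 0 ≤ b)
    (hs : 0 < s) (ht : 0 < t) :
    √a + √b ≤ √((s + t) * (s⁻¹ * a + t⁻¹ * b)) := by
  apply Real.le_sqrt_of_sq_le
  simpa [Real.sq_sqrt, ha, hb, div_eq_inv_mul] using
    add_sq_le_mul_add_sq_div (x := √a) (y := √b) hs ht

theorem support_function_minkowski_general {n : ℕ}
    (Q1 Q2 : Matrix (Fin n) (Fin n) ℝ)
    (hQ1 : Q1.PosDef) (hQ2 : Q2.PosDef)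
    (Qbar : Matrix (Fin n) (Fin n) ℝ)
    (hQbar : Qbar = (Real.sqrt (Matrix.trace Q1) + Real.sqrt (Matrix.trace Q2)) •
      ((Real.sqrt (Matrix.trace Q1))⁻¹ • Q1 + (Real.sqrt (Matrix.trace Q2))⁻¹ • Q2))
    (u : Fin n → ℝ) :
    Real.sqrt (dotProduct u (Q1.mulVec u)) +
      Real.sqrt (dotProduct u (Q2.mulVec u)) ≤
    Real.sqrt (dotProduct u (Qbar.mulVec u)) := by
  rcases eq_or_ne u 0 with rfl | hu
  · simp
  have : Nonempty (Fin n) := ⟨(Function.ne_iff.mp hu).choose⟩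
  have hQbar_form : u ⬝ᵥ (Qbar *ᵥ u) = (√Q1.trace + √Q2.trace) *
      ((√Q1.trace)⁻¹ * (u ⬝ᵥ (Q1 *ᵥ u)) + (√Q2.trace)⁻¹ * (u ⬝ᵥ (Q2 *ᵥ u))) := by
    simp only [hQbar, smul_mulVec, add_mulVec, dotProduct_smul, dotProduct_add, smul_eq_mul]
  rw [hQbar_form]
  exact sqrt_add_sqrt_le_sqrt_mul_inv_mul_add
    (by simpa using hQ1.posSemidef.dotProduct_mulVec_nonneg u)
    (by simpa using hQ2.posSemidef.dotProduct_mulVec_nonneg u)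
    (Real.sqrt_pos.2 hQ1.trace_pos) (Real.sqrt_pos.2 hQ2.trace_pos)

theorem support_function_minkowski {n : ℕ}
    (Q1 Q2 : Matrix (Fin n) (Fin n) ℝ)
    (hQ1 : Q1.PosDef) (hQ2 : Q2.PosDef)
    (Qbar : Matrix (Fin n) (Fin n) ℝ)
    (hQbar : Qbar = (Real.sqrt (Matrix.trace Q1) + Real.sqrt (Matrix.trace Q2)) •
      ((Real.sqrt (Matrix.trace Q1))⁻¹ • Q1 + (Real.sqrt (Matrix.trace Q2))⁻¹ • Q2))
    (u : Fin n → ℝ) (hu : dotProduct u u = 1) :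
    Real.sqrt (dotProduct u (Q1.mulVec u)) +
      Real.sqrt (dotProduct u (Q2.mulVec u)) ≤
    Real.sqrt (dotProduct u (Qbar.mulVec u)) :=
  support_function_minkowski_general Q1 Q2 hQ1 hQ2 Qbar hQbar u
end

section
/- Let h: ℝⁿ → ℝ be continuously differentiable and let p: [0,∞) → ℝⁿ be a C¹ curve with h(p(0)) > 0. Let γ: ℝ → ℝ be locally Lipschitz with γ(0) = 0 and γ strictly increasing (class-K extended). If ∇h(p(t))·ṗ(t) + γ(h(p(t))) > 0 for all t ≥ 0, then h(p(t)) > 0 for all t ≥ 0. -/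
/-!
Along the curve, `y = h ∘ p` satisfies `y' > -γ(y)`, so `y' > 0` wherever `y = 0`, because
`γ 0 = 0`. Hence `y` can never cross zero: the fencing theorem gives `y ≥ 0`, and a zero of `y`
at a time `t > 0` would be a local minimum where the derivative does not vanish.
-/

open Set Filter Topology

theorem nonneg_of_deriv_pos_at_zeros {y y' : ℝ → ℝ} {a : ℝ} (hcont : ContinuousOn y (Ici a))
    (hy : ∀ t, a ≤ t → HasDerivWithinAt y (y' t) (Ici t) t) (ha : 0 ≤ y a)
    (hzero : ∀ t, a ≤ t → y t = 0 → 0 < y' t) {t : ℝ} (ht : a ≤ t) : 0 ≤ y t := by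
  have fence := image_le_of_deriv_right_lt_deriv_boundary (f := fun u => -y u)
    (f' := fun u => -y' u) (B := 0) (B' := 0) (hcont.mono Icc_subset_Ici_self).neg
    (fun s hs => (hy s hs.1).neg) (by simpa using ha) (fun _ => hasDerivAt_const _ _)
    (fun s hs hys => by simpa using hzero s hs.1 (neg_eq_zero.mp hys)) ⟨ht, le_rfl⟩
  simpa using fence

theorem pos_of_deriv_pos_at_zeros {y y' : ℝ → ℝ} {a : ℝ}
    (hy : ∀ t, a ≤ t → HasDerivAt y (y' t) t) (ha : 0 < y a)
    (hzero : ∀ t, a ≤ t → y t = 0 → 0 < y' t) {t : ℝ} (ht : a ≤ t) : 0 < y t := by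
  have nonneg : ∀ s, a ≤ s → 0 ≤ y s := fun s hs =>
    nonneg_of_deriv_pos_at_zeros (fun u hu => (hy u hu).continuousAt.continuousWithinAt)
      (fun u hu => (hy u hu).hasDerivWithinAt) ha.le hzero hs
  rcases ht.eq_or_lt with rfl | hat
  · exact ha
  refine (nonneg t ht).lt_of_ne' fun hyt => ?_
  have hmin : IsLocalMin y t := by
    filter_upwards [Ici_mem_nhds hat] with u hu
    exact hyt ▸ nonneg u hu
  exact (hzero t ht hyt).ne' (hmin.hasDerivAt_eq_zero (hy t ht))

theorem barrier_forward_invariance_general {n : ℕ}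
    (h : (Fin n → ℝ) → ℝ) (hh : ContDiff ℝ 1 h)
    (p : ℝ → Fin n → ℝ) (p' : ℝ → Fin n → ℝ)
    (hp : ∀ t, HasDerivAt p (p' t) t)
    (γ : ℝ → ℝ) (hγ0 : γ 0 = 0)
    (hinit : h (p 0) > 0)
    (hbarrier : ∀ t, 0 ≤ t → fderiv ℝ h (p t) (p' t) + γ (h (p t)) > 0) :
    ∀ t, 0 ≤ t → h (p t) > 0 := by
  have hdiff : Differentiable ℝ h := hh.differentiable one_ne_zero
  intro t ht
  refine pos_of_deriv_pos_at_zeros (y := fun s => h (p s))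
    (fun s _ => (hdiff (p s)).hasFDerivAt.comp_hasDerivAt s (hp s)) hinit (fun s hs hzero => ?_) ht
  simpa [hzero, hγ0] using hbarrier s hs

theorem barrier_forward_invariance {n : ℕ}
    (h : (Fin n → ℝ) → ℝ) (hh : ContDiff ℝ 1 h)
    (p : ℝ → Fin n → ℝ) (p' : ℝ → Fin n → ℝ)
    (hp : ∀ t, HasDerivAt p (p' t) t) (hp' : Continuous p')
    (γ : ℝ → ℝ) (hγlip : LocallyLipschitz γ) (hγ0 : γ 0 = 0)
    (hγmono : StrictMono γ)
    (hinit : h (p 0) > 0)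
    (hbarrier : ∀ t, 0 ≤ t → fderiv ℝ h (p t) (p' t) + γ (h (p t)) > 0) :
    ∀ t, 0 ≤ t → h (p t) > 0 :=
  barrier_forward_invariance_general h hh p p' hp γ hγ0 hinit hbarrier
end
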